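/- arXiv:1209.1004 — 3 statements merged into one kernel-verified Lean document; each statement's English description precedes it below -/
import Mathlib

section
/- In PSL(2,ℂ), the element x has order 5, y has order 2, z′ has order 2, y·z′⁻¹ has order 6, z′·x⁻¹ has order 2, and x·y⁻¹ has order 3 (so x, y, z′ satisfy the defining relations of the tetrahedral group presentation Γ(5,2,2,6,2,3) = ⟨x′,y′,z′ | x′⁵, y′², z′², (y′z′⁻¹)⁶, (z′x′⁻¹)², (x′y′⁻¹)³⟩). -/
/-!
Setup: `PSL(2,ℂ)` as the quotient of `SL(2,ℂ)` by its center, the constants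
`u = (1+√5)/2`, `ω = (1+√(-3))/2 = (1+√3·i)/2`, and the generators of the
tetrahedral groups of Neumann–Reid.
-/

noncomputable section

abbrev SL2C := Matrix.SpecialLinearGroup (Fin 2) ℂ

/-- `PSL(2,ℂ)`, the quotient of `SL(2,ℂ)` by its center `{±I}`. -/
abbrev PSL2C := SL2C ⧸ Subgroup.center SL2C

/-- The projection `SL(2,ℂ) → PSL(2,ℂ)`, `A ↦ [A]`. -/
def pr : SL2C →* PSL2C := QuotientGroup.mk' _

def u : ℂ := ((1 + Real.sqrt 5) / 2 : ℝ)
def ω : ℂ := (1 + Real.sqrt 3 * Complex.I) / 2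

lemma u_ne : u ≠ 0 := Complex.ofReal_ne_zero.mpr (by positivity)

lemma ω_ne : ω ≠ 0 := by
  unfold ω
  intro h
  rw [div_eq_zero_iff] at h
  rcases h with h | h
  · have := congrArg Complex.re h
    simp at this
  · norm_num at h

def xSL : SL2C := ⟨!![u, -u⁻¹; u, 0], by
  rw [Matrix.det_fin_two_of]; field_simp [u_ne]; ring⟩

def ySL : SL2C := ⟨!![0, ω * u⁻¹; -ω⁻¹ * u, 0], by
  rw [Matrix.det_fin_two_of]; field_simp [u_ne, ω_ne]; ring⟩

def zSL : SL2C := ⟨!![0, ω ^ 2 * u⁻¹; -(ω ^ 2)⁻¹ * u, 0], by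
  rw [Matrix.det_fin_two_of]; field_simp [u_ne, ω_ne]; ring⟩

def x : PSL2C := pr xSL
def y : PSL2C := pr ySL
def z : PSL2C := pr zSL

def zSL' : SL2C := ⟨!![0, Complex.I * u⁻¹; Complex.I * u, 0], by
  rw [Matrix.det_fin_two_of]
  field_simp [u_ne]
  rw [Complex.I_sq]
  ring⟩

def z' : PSL2C := pr zSL'

/-!
By Cayley–Hamilton, `A ∈ SL(2, R)` with trace `t` is a root of `X² - tX + 1`, so `Aⁿ = ±1`
as soon as `X² - tX + 1` divides `Xⁿ ∓ 1`; conversely a central element `±1` has trace `±2`.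
Hence the order of the class of `A` in `PSL(2, R)` can be read off from `t`: it is `2` if
`t = 0`, `3` if `t = -1`, `5` if `t² = t + 1` and `6` if `t² = 3`. The six elements of the
theorem have traces `u`, `0`, `0`, `√3`, `0` and `-1`.
-/

open scoped MatrixGroups

namespace Matrix.SpecialLinearGroup

open Polynomial

variable {R : Type*} [CommRing R]

local notation:1024 "↑ₘ" A:1024 => ((A : SL(2, R)) : Matrix (Fin 2) (Fin 2) R)

theorem trace_mul_inv_fin_two (A B : SL(2, R)) :
    trace ↑ₘ(A * B⁻¹) = A 0 0 * B 1 1 - A 0 1 * B 1 0 - A 1 0 * B 0 1 + A 1 1 * B 0 0 := by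
  rw [coe_mul, coe_inv, adjugate_fin_two, trace_fin_two]
  simp only [mul_apply, Fin.sum_univ_two, of_apply, cons_val', cons_val_zero, cons_val_one,
    cons_val_fin_one]
  ring

section Nontrivial

variable [Nontrivial R] (A : SL(2, R))

theorem aeval_eq_zero_of_dvd {p : R[X]} (h : X ^ 2 - C (trace ↑ₘA) * X + 1 ∣ p) :
    aeval ↑ₘA p = 0 := by
  obtain ⟨q, rfl⟩ := h
  have hA := aeval_self_charpoly ↑ₘA
  rw [charpoly_fin_two, A.det_coe, map_one] at hA
  rw [map_mul, hA, zero_mul]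

theorem sq_eq_trace_smul_sub_one : ↑ₘA ^ 2 = trace ↑ₘA • ↑ₘA - 1 := by
  have hA := A.aeval_eq_zero_of_dvd dvd_rfl
  simp only [map_add, map_sub, map_mul, map_pow, aeval_X, aeval_C, map_one,
    Algebra.algebraMap_eq_smul_one, smul_one_mul] at hA
  linear_combination (norm := module) hA

theorem trace_sq : trace (↑ₘA ^ 2) = trace ↑ₘA ^ 2 - 2 := by
  rw [sq_eq_trace_smul_sub_one, trace_sub, trace_smul, trace_one, Fintype.card_fin,
    smul_eq_mul, Nat.cast_ofNat, sq]

theorem trace_pow_three : trace (↑ₘA ^ 3) = trace ↑ₘA ^ 3 - 3 * trace ↑ₘA := by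
  rw [pow_succ, sq_eq_trace_smul_sub_one, sub_mul, smul_mul_assoc, ← sq,
    sq_eq_trace_smul_sub_one]
  simp only [smul_sub, one_mul, trace_sub, trace_smul, smul_eq_mul, trace_one,
    Fintype.card_fin, Nat.cast_ofNat]
  ring

end Nontrivial

section IsDomain

variable [IsDomain R] (A : SL(2, R))

theorem trace_eq_two_or_eq_neg_two_of_mem_center (hA : A ∈ Subgroup.center SL(2, R)) :
    trace ↑ₘA = 2 ∨ trace ↑ₘA = -2 := by
  obtain ⟨r, hr, hrA⟩ := mem_center_iff.mp hA
  rw [Fintype.card_fin, sq_eq_one_iff] at hr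
  rw [← hrA]
  rcases hr with rfl | rfl <;> simp

theorem coe_ne_one_of_trace_ne (h₁ : trace ↑ₘA ≠ 2) (h₂ : trace ↑ₘA ≠ -2) :
    (A : PSL(2, R)) ≠ 1 := by
  rw [Ne, QuotientGroup.eq_one_iff]
  exact fun hA ↦ (A.trace_eq_two_or_eq_neg_two_of_mem_center hA).elim h₁ h₂

theorem coe_pow_eq_one_of_dvd {n : ℕ} {c : R} (hc : c ^ 2 = 1)
    (h : X ^ 2 - C (trace ↑ₘA) * X + 1 ∣ X ^ n - C c) : (A : PSL(2, R)) ^ n = 1 := by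
  rw [← QuotientGroup.mk_pow, QuotientGroup.eq_one_iff, mem_center_iff]
  refine ⟨c, by rwa [Fintype.card_fin], ?_⟩
  have hA := A.aeval_eq_zero_of_dvd h
  rw [map_sub, map_pow, aeval_X, aeval_C, sub_eq_zero] at hA
  rw [coe_pow, hA, algebraMap_eq_diagonal, scalar_apply]
  rfl

variable [CharZero R]

theorem orderOf_coe_eq_two_of_trace_eq_zero (h : trace ↑ₘA = 0) :
    orderOf (A : PSL(2, R)) = 2 := by
  have hdvd : X ^ 2 - C (trace ↑ₘA) * X + 1 ∣ X ^ 2 - C (-1) := by simp [h]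
  exact orderOf_eq_prime (A.coe_pow_eq_one_of_dvd (by norm_num) hdvd)
    (A.coe_ne_one_of_trace_ne (by rw [h]; norm_num) (by rw [h]; norm_num))

theorem orderOf_coe_eq_three_of_trace_eq_neg_one (h : trace ↑ₘA = -1) :
    orderOf (A : PSL(2, R)) = 3 := by
  have hdvd : X ^ 2 - C (trace ↑ₘA) * X + 1 ∣ X ^ 3 - C 1 :=
    ⟨X - 1, by rw [h]; simp only [map_neg, map_one]; ring⟩
  exact orderOf_eq_prime (A.coe_pow_eq_one_of_dvd (by norm_num) hdvd)
    (A.coe_ne_one_of_trace_ne (by rw [h]; norm_num) (by rw [h]; norm_num))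

theorem orderOf_coe_eq_five_of_trace_sq_eq (h : trace ↑ₘA ^ 2 = trace ↑ₘA + 1) :
    orderOf (A : PSL(2, R)) = 5 := by
  have : Fact (Nat.Prime 5) := ⟨by norm_num⟩
  set t := trace ↑ₘA
  have hC : C t ^ 2 = C t + 1 := by simpa using congrArg C h
  have hdvd : X ^ 2 - C t * X + 1 ∣ X ^ 5 - C (-1) :=
    ⟨X ^ 3 + C t * X ^ 2 + C t * X + 1, by
      simp only [map_neg, map_one]; linear_combination (X ^ 3 + X ^ 2) * hC⟩
  refine orderOf_eq_prime (A.coe_pow_eq_one_of_dvd (by norm_num) hdvd)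
    (A.coe_ne_one_of_trace_ne ?_ ?_) <;> rintro (ht : t = _) <;> rw [ht] at h <;> norm_num at h

theorem orderOf_coe_eq_six_of_trace_sq_eq (h : trace ↑ₘA ^ 2 = 3) :
    orderOf (A : PSL(2, R)) = 6 := by
  set t := trace ↑ₘA
  have hC : C t ^ 2 = 3 := by rw [← map_pow, h, map_ofNat]
  have hdvd : X ^ 2 - C t * X + 1 ∣ X ^ 6 - C (-1) :=
    ⟨(X ^ 2 + C t * X + 1) * (X ^ 2 + 1), by
      simp only [map_neg, map_one]; linear_combination X ^ 2 * (X ^ 2 + 1) * hC⟩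
  have hsq : (A : PSL(2, R)) ^ 2 ≠ 1 := by
    have : trace ↑ₘ(A ^ 2) = 1 := by rw [coe_pow, trace_sq, h]; norm_num
    rw [← QuotientGroup.mk_pow]
    exact (A ^ 2).coe_ne_one_of_trace_ne (by rw [this]; norm_num) (by rw [this]; norm_num)
  have hcube : (A : PSL(2, R)) ^ 3 ≠ 1 := by
    have : trace ↑ₘ(A ^ 3) = 0 := by
      rw [coe_pow, trace_pow_three]; linear_combination t * h
    rw [← QuotientGroup.mk_pow]
    exact (A ^ 3).coe_ne_one_of_trace_ne (by rw [this]; norm_num) (by rw [this]; norm_num)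
  refine orderOf_eq_of_pow_and_pow_div_prime (by norm_num)
    (A.coe_pow_eq_one_of_dvd (by norm_num) hdvd) fun p hp hp6 ↦ ?_
  rcases hp.dvd_mul.mp (show p ∣ 2 * 3 from hp6) with h2 | h3
  · rwa [(Nat.prime_dvd_prime_iff_eq hp Nat.prime_two).mp h2]
  · rwa [(Nat.prime_dvd_prime_iff_eq hp Nat.prime_three).mp h3]

end IsDomain

end Matrix.SpecialLinearGroup

open Matrix Matrix.SpecialLinearGroup Complex

theorem u_sq : u ^ 2 = u + 1 := by
  have h5 : √5 ^ 2 = 5 := Real.sq_sqrt (by norm_num)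
  have : ((1 + √5) / 2) ^ 2 = (1 + √5) / 2 + 1 := by linear_combination h5 / 4
  unfold u
  exact_mod_cast this

theorem ω_inv : ω⁻¹ = 1 - ω := by
  have h3 : ((√3 : ℝ) : ℂ) ^ 2 = 3 := by
    rw [← ofReal_pow, Real.sq_sqrt (by norm_num)]; norm_num
  refine inv_eq_of_mul_eq_one_right ?_
  unfold ω
  linear_combination h3 / 4 - ((√3 : ℝ) : ℂ) ^ 2 / 4 * I_sq

theorem trace_xSL : trace (xSL : Matrix (Fin 2) (Fin 2) ℂ) = u := by
  simp [xSL, trace_fin_two]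

theorem trace_ySL : trace (ySL : Matrix (Fin 2) (Fin 2) ℂ) = 0 := by
  simp [ySL, trace_fin_two]

theorem trace_zSL' : trace (zSL' : Matrix (Fin 2) (Fin 2) ℂ) = 0 := by
  simp [zSL', trace_fin_two]

theorem trace_ySL_mul_inv_zSL' :
    trace ((ySL * zSL'⁻¹ : SL2C) : Matrix (Fin 2) (Fin 2) ℂ) = √3 := by
  rw [trace_mul_inv_fin_two]
  show 0 * 0 - ω * u⁻¹ * (I * u) - -ω⁻¹ * u * (I * u⁻¹) + 0 * 0 = √3
  rw [ω_inv]
  field_simp [u_ne]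
  unfold ω
  linear_combination (-(√3 : ℂ)) * I_sq

theorem trace_zSL'_mul_inv_xSL :
    trace ((zSL' * xSL⁻¹ : SL2C) : Matrix (Fin 2) (Fin 2) ℂ) = 0 := by
  rw [trace_mul_inv_fin_two]
  show 0 * 0 - I * u⁻¹ * u - I * u * -u⁻¹ + 0 * u = 0
  ring

theorem trace_xSL_mul_inv_ySL :
    trace ((xSL * ySL⁻¹ : SL2C) : Matrix (Fin 2) (Fin 2) ℂ) = -1 := by
  rw [trace_mul_inv_fin_two]
  show u * 0 - -u⁻¹ * (-ω⁻¹ * u) - u * (ω * u⁻¹) + 0 * 0 = -1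
  rw [ω_inv]
  field_simp [u_ne]
  ring

/-- `x, y, z'` satisfy the defining relations of `Γ(5,2,2,6,2,3)`. -/
theorem stmt1 :
    orderOf x = 5 ∧ orderOf y = 2 ∧ orderOf z' = 2 ∧
    orderOf (y * z'⁻¹) = 6 ∧ orderOf (z' * x⁻¹) = 2 ∧ orderOf (x * y⁻¹) = 3 := by
  simp only [x, y, z', ← map_inv, ← map_mul]
  refine ⟨xSL.orderOf_coe_eq_five_of_trace_sq_eq ?_,
    ySL.orderOf_coe_eq_two_of_trace_eq_zero trace_ySL,
    zSL'.orderOf_coe_eq_two_of_trace_eq_zero trace_zSL',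
    (ySL * zSL'⁻¹).orderOf_coe_eq_six_of_trace_sq_eq ?_,
    (zSL' * xSL⁻¹).orderOf_coe_eq_two_of_trace_eq_zero trace_zSL'_mul_inv_xSL,
    (xSL * ySL⁻¹).orderOf_coe_eq_three_of_trace_eq_neg_one trace_xSL_mul_inv_ySL⟩
  · rw [trace_xSL, u_sq]
  · rw [trace_ySL_mul_inv_zSL']
    exact_mod_cast Real.sq_sqrt (by norm_num)
end
end

section
/- In PSL(2,ℂ), the word z·x⁻¹·z·y⁻¹ equals the class of the parabolic matrix [[1, ω], [0, 1]]. -/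
/-!
Setup: `PSL(2,ℂ)` as the quotient of `SL(2,ℂ)` by its center, the constants
`u = (1+√5)/2`, `ω = (1+√(-3))/2 = (1+√3·i)/2`, and the generators of the
tetrahedral groups of Neumann–Reid.
-/

noncomputable section

/-! Multiplying out, `zSL * xSL⁻¹ * zSL * ySL⁻¹ = [[-ω³, ω], [0, -ω⁻³]]` already in `SL(2,ℂ)`, and
`ω` is a primitive sixth root of unity, so `ω³ = -1`. -/

lemma ω_pow_three : ω ^ 3 = -1 := by
  have h3 : (Real.sqrt 3 : ℂ) ^ 2 = 3 := by
    rw [← Complex.ofReal_pow, Real.sq_sqrt (by norm_num)]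
    norm_num
  have hquad : ω ^ 2 - ω + 1 = 0 := by
    unfold ω
    linear_combination (Complex.I ^ 2 / 4) * h3 + (3 / 4 : ℂ) * Complex.I_sq
  linear_combination (ω + 1) * hquad

theorem zxzy_word_eq_of_pow_three_eq_neg_one {K : Type*} [Field K] {u w : K}
    (hu : u ≠ 0) (hw : w ^ 3 = -1) :
    !![0, w ^ 2 * u⁻¹; -(w ^ 2)⁻¹ * u, 0] * (!![u, -u⁻¹; u, 0]).adjugate
      * !![0, w ^ 2 * u⁻¹; -(w ^ 2)⁻¹ * u, 0] * (!![0, w * u⁻¹; -w⁻¹ * u, 0]).adjugate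
      = !![1, w; 0, 1] := by
  have hw0 : w ≠ 0 := by rintro rfl; norm_num at hw
  simp only [Matrix.adjugate_fin_two_of, Matrix.mul_fin_two]
  ext i j
  fin_cases i <;> fin_cases j <;>
    simp only [mul_zero, zero_mul, mul_neg, neg_mul, zero_add, add_zero, neg_neg, neg_zero,
      Fin.zero_eta, Fin.mk_one, Fin.isValue, Matrix.of_apply, Matrix.cons_val', Matrix.cons_val_zero,
      Matrix.cons_val_one, Matrix.cons_val_fin_one] <;>
    field_simp <;> linear_combination -hw

/-- The word `z·x⁻¹·z·y⁻¹` is the parabolic `[[1,ω],[0,1]]`. -/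
theorem stmt4 :
    z * x⁻¹ * z * y⁻¹ = pr ⟨!![1, ω; 0, 1], by simp [Matrix.det_fin_two_of]⟩ := by
  have hword : zSL * xSL⁻¹ * zSL * ySL⁻¹ = ⟨!![1, ω; 0, 1], by simp [Matrix.det_fin_two_of]⟩ :=
    Subtype.ext (zxzy_word_eq_of_pow_three_eq_neg_one u_ne ω_pow_three)
  simp only [x, y, z, ← map_inv, ← map_mul, hword]
end
end

section
/- In PSL(2,ℂ), the word z·x⁻¹·y·x⁻¹ equals the class of the parabolic matrix [[1, ω²], [0, 1]]. -/
/-!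
Setup: `PSL(2,ℂ)` as the quotient of `SL(2,ℂ)` by its center, the constants
`u = (1+√5)/2`, `ω = (1+√(-3))/2 = (1+√3·i)/2`, and the generators of the
tetrahedral groups of Neumann–Reid.
-/

noncomputable section

/-!
Since `x⁻¹ = [[0, u⁻¹], [-u, u]]`, both `z·x⁻¹` and `y·x⁻¹` are upper triangular of the shape
`[[-c, c], [0, -c⁻¹]]` (with `c = ω²`, resp. `c = ω`), and `u` cancels. As `ω³ = -1` and
`ω² = ω - 1`, their product is `-[[1, ω²], [0, 1]]` in `SL(2,ℂ)`, whose class in `PSL(2,ℂ)` is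
that of `[[1, ω²], [0, 1]]`.
-/

lemma Subgroup.neg_one_mem_center {G : Type*} [Group G] [HasDistribNeg G] :
    (-1 : G) ∈ Subgroup.center G :=
  Subgroup.mem_center_iff.mpr fun g => by rw [mul_neg_one, neg_one_mul]

lemma QuotientGroup.mk_neg_center {G : Type*} [Group G] [HasDistribNeg G] (g : G) :
    ((-g : G) : G ⧸ Subgroup.center G) = g := by
  rw [← mul_neg_one]
  exact QuotientGroup.mk_mul_of_mem g Subgroup.neg_one_mem_center

lemma Matrix.antidiag_mul_eq_upper_fin_two {K : Type*} [Field K] (c : K) {u : K} (hu : u ≠ 0) :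
    !![0, c * u⁻¹; -c⁻¹ * u, 0] * !![0, u⁻¹; -u, u] = !![-c, c; 0, -c⁻¹] := by
  simp [hu]

lemma Matrix.upper_mul_upper_fin_two {K : Type*} [Field K] (c d : K) :
    !![-c, c; 0, -c⁻¹] * !![-d, d; 0, -d⁻¹] = !![c * d, -(c * d) - c * d⁻¹; 0, (c * d)⁻¹] := by
  rw [Matrix.mul_fin_two]
  ext i j
  fin_cases i <;> fin_cases j <;> simp <;> ring

lemma ω_sq : ω ^ 2 = ω - 1 := by
  have h3 : (Real.sqrt 3 : ℂ) ^ 2 = 3 := by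
    exact_mod_cast congrArg Complex.ofReal (Real.sq_sqrt (by norm_num : (0 : ℝ) ≤ 3))
  unfold ω
  linear_combination (Complex.I ^ 2 / 4) * h3 + (3 / 4 : ℂ) * Complex.I_sq

lemma coe_xSL_inv : ((xSL⁻¹ : SL2C) : Matrix (Fin 2) (Fin 2) ℂ) = !![0, u⁻¹; -u, u] := by
  rw [Matrix.SpecialLinearGroup.coe_inv, xSL, Matrix.adjugate_fin_two_of]
  simp

lemma coe_word_eq_neg_parabolic :
    ((zSL * xSL⁻¹ * (ySL * xSL⁻¹) : SL2C) : Matrix (Fin 2) (Fin 2) ℂ) = -!![1, ω ^ 2; 0, 1] := by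
  simp only [Matrix.SpecialLinearGroup.coe_mul, coe_xSL_inv]
  change !![0, ω ^ 2 * u⁻¹; -(ω ^ 2)⁻¹ * u, 0] * _ * (!![0, ω * u⁻¹; -ω⁻¹ * u, 0] * _) = _
  rw [Matrix.antidiag_mul_eq_upper_fin_two _ u_ne, Matrix.antidiag_mul_eq_upper_fin_two _ u_ne,
    Matrix.upper_mul_upper_fin_two]
  have hω3 : ω ^ 2 * ω = -1 := by linear_combination (ω + 1) * ω_sq
  have hω2 : ω ^ 2 * ω⁻¹ = ω := by field_simp [ω_ne]
  rw [hω3, hω2, ω_sq]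
  ext i j
  fin_cases i <;> fin_cases j <;> simp

/-- The word `z·x⁻¹·y·x⁻¹` is the parabolic `[[1,ω²],[0,1]]`. -/
theorem stmt5 :
    z * x⁻¹ * y * x⁻¹ = pr ⟨!![1, ω ^ 2; 0, 1], by simp [Matrix.det_fin_two_of]⟩ := by
  calc z * x⁻¹ * y * x⁻¹ = pr (zSL * xSL⁻¹ * (ySL * xSL⁻¹)) := by
        simp only [z, x, y, map_mul, map_inv, mul_assoc]
    _ = pr (-⟨!![1, ω ^ 2; 0, 1], by simp [Matrix.det_fin_two_of]⟩) :=
        congrArg pr (Subtype.ext coe_word_eq_neg_parabolic)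
    _ = _ := QuotientGroup.mk_neg_center _
end
end
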